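/- arXiv:1507.06756 — 2 statements merged into one kernel-verified Lean document; each statement's English description precedes it below -/
import Mathlib

section
/- Let e ≥ 2 and let (n_1, …, n_e) be a sequence of positive integers such that the Hirzebruch–Jung continued fraction [n_1, …, n_e] is defined (all proper tails nonzero) and equals 0. Then n_i = 1 for some index i. -/
/-- Hirzebruch–Jung continued fraction: `hj [] = 0`, `hj (c :: cs) = c - (hj cs)⁻¹`.
(In particular `hj [c] = c` since `(0:ℚ)⁻¹ = 0`.) -/
def hj : List ℚ → ℚ
  | [] => 0
  | c :: cs => c - (hj cs)⁻¹

/-- All proper nonempty tails (suffixes) of `l` have nonzero HJ value, i.e. the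
continued fraction `hj l` is defined. -/
def hjTailsNonzero (l : List ℚ) : Prop :=
  ∀ l' : List ℚ, l' ≠ [] → l' ≠ l → l' <:+ l → hj l' ≠ 0

/-- The HJ continued fraction of `l` is defined and equals `0`. -/
def hjZero (l : List ℚ) : Prop :=
  hjTailsNonzero l ∧ hj l = 0

def castList (l : List ℤ) : List ℚ := l.map fun x => (x : ℚ)

/-! If every entry is at least `2`, then inductively `hj cs > 1`, so `(hj cs)⁻¹ < 1` and
`hj (c :: cs) = c - (hj cs)⁻¹ > 1`; in particular the continued fraction cannot vanish. -/

theorem one_lt_hj_of_two_le {l : List ℚ} (hl : l ≠ []) (h2 : ∀ x ∈ l, 2 ≤ x) : 1 < hj l := by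
  induction l with
  | nil => exact absurd rfl hl
  | cons c cs ih =>
    have hc : 2 ≤ c := h2 c List.mem_cons_self
    rcases eq_or_ne cs [] with rfl | hcs
    · simp only [hj, inv_zero, sub_zero]
      linarith
    · have htail : 1 < hj cs := ih hcs fun x hx => h2 x (List.mem_cons_of_mem _ hx)
      have hinv : (hj cs)⁻¹ < 1 := inv_lt_one_of_one_lt₀ htail
      simp only [hj]
      linarith

/- `castList` elaborates through the list-monad coercion `List ℤ → List ℚ` (a `flatMap` of
singletons) before mapping the identity, so it is not syntactically a `List.map`. -/
theorem castList_eq_map (l : List ℤ) : castList l = l.map ((↑) : ℤ → ℚ) := by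
  induction l <;> simp_all [castList]

theorem stmt_8 (l : List ℤ) (hpos : ∀ x ∈ l, 1 ≤ x) (hlen : 2 ≤ l.length)
    (h : hjZero (castList l)) : (1 : ℤ) ∈ l := by
  by_contra hone
  have hne : castList l ≠ [] := by
    rw [castList_eq_map, Ne, List.map_eq_nil_iff]
    rintro rfl
    simp at hlen
  have htwo : ∀ x ∈ castList l, 2 ≤ x := by
    rw [castList_eq_map, List.forall_mem_map]
    intro y hy
    have hy1 : y ≠ 1 := by rintro rfl; exact hone hy
    have hy2 : 2 ≤ y := by have := hpos y hy; omega
    exact_mod_cast hy2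
  have hgt := one_lt_hj_of_two_le hne htwo
  linarith [h.2]
end

section
/- (Combinatorics of the usual flip.) Let m > a ≥ 1 be coprime with m ≥ 2, and let [e_1, …, e_s] (all e_j ≥ 2, s ≥ 2) be the Hirzebruch–Jung expansion of m²/(ma−1). There exists an index i with e_i ≥ 3; let i be the largest such index (so e_j = 2 for all j > i). If i ≥ 2, then the sequence [e_2, …, e_{i−1}, e_i − 1] is the Hirzebruch–Jung expansion of m'²/(m'a'−1) for some coprime integers m' > a' ≥ 1 with 2 ≤ m' < m; in particular it is again a Wahl resolution string. -/
/-!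
Wahl strings are generated from `[4]` by the moves `[e₁, …, e_s] ↦ [2, e₁, …, e_s + 1]` and
`[e₁, …, e_s] ↦ [e₁ + 1, …, e_s, 2]`, which act on `(m, a)` as `(m, a) ↦ (2m - a, m)` and
`(m, a) ↦ (m + a, a)`. Running them backwards is a Euclid-type descent reaching every coprime
pair `1 ≤ a < m`, and tracking the matrix product `∏ [[e_j, -1], [1, 0]]`, whose first column is
(numerator, denominator) of the HJ value, shows that the string of `(m, a)` expands
`m² / (ma - 1)`. Expansions with entries `≥ 2` are unique (the first entry is the ceiling of the
value), so `e` is that string. Its last entry `≥ 3` was created by the last move of the first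
kind; undoing it together with all later moves of the second kind leaves `[e₂, …, e_i - 1]`,
the Wahl string of a pair with smaller `m`.
-/

lemma List.append_cons_replicate_succ {α : Type*} (u : List α) (c d : α) (k : ℕ) :
    u ++ c :: List.replicate (k + 1) d = (u ++ c :: List.replicate k d) ++ [d] := by
  simp [List.replicate_succ']

lemma List.eq_cons_take_append_cons_replicate {α : Type*} {e : List α} {i : ℕ} {d : α}
    (hi : i < e.length) (h1 : 1 ≤ i) (hafter : ∀ j (hj : j < e.length), i < j → e[j] = d) :
    e = e[0] :: ((e.drop 1).take (i - 1) ++ e[i] :: List.replicate (e.length - i - 1) d) := by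
  obtain ⟨y, t, rfl⟩ :=
    List.exists_cons_of_ne_nil (List.ne_nil_of_length_pos (Nat.zero_lt_of_lt hi))
  obtain ⟨n, rfl⟩ : ∃ n, i = n + 1 := ⟨i - 1, by omega⟩
  have hn : n < t.length := by simpa using hi
  simp only [List.getElem_cons_zero, List.getElem_cons_succ, List.drop_one, List.tail_cons,
    add_tsub_cancel_right, List.length_cons, List.cons.injEq, true_and]
  have htail : t.drop (n + 1) = List.replicate (t.length - n - 1) d := by
    refine List.eq_replicate_iff.2 ⟨by simp; omega, fun b hb => ?_⟩
    obtain ⟨j, hj, rfl⟩ := List.mem_iff_getElem.1 hb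
    rw [List.getElem_drop, ← List.getElem_cons_succ (a := y)
      (h := by simp at hj ⊢; omega)]
    exact hafter _ _ (by omega)
  conv_lhs => rw [← List.take_append_drop n t, ← List.getElem_cons_drop hn, htail]
  congr 3
  omega

def hjMatrix (x : ℤ) : Matrix (Fin 2) (Fin 2) ℤ := !![x, -1; 1, 0]

def continuantMatrix (l : List ℤ) : Matrix (Fin 2) (Fin 2) ℤ := (l.map hjMatrix).prod

@[simp]
lemma continuantMatrix_nil : continuantMatrix [] = 1 := rfl

@[simp]
lemma continuantMatrix_cons (x : ℤ) (l : List ℤ) :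
    continuantMatrix (x :: l) = hjMatrix x * continuantMatrix l := rfl

@[simp]
lemma continuantMatrix_append (l₁ l₂ : List ℤ) :
    continuantMatrix (l₁ ++ l₂) = continuantMatrix l₁ * continuantMatrix l₂ := by
  simp [continuantMatrix]

lemma hjMatrix_add_one_eq_hjMatrix_mul (x : ℤ) :
    hjMatrix (x + 1) = hjMatrix x * !![1, 0; -1, 1] := by
  simp [hjMatrix]

lemma hjMatrix_add_one_eq_mul_hjMatrix (x : ℤ) :
    hjMatrix (x + 1) = !![1, 1; 0, 1] * hjMatrix x := by
  simp [hjMatrix]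

lemma hjMatrix_mul_apply_zero_zero (x : ℤ) (M : Matrix (Fin 2) (Fin 2) ℤ) :
    (hjMatrix x * M) 0 0 = x * M 0 0 - M 1 0 := by
  simp [hjMatrix, Matrix.mul_apply, Fin.sum_univ_two]; ring

lemma hjMatrix_mul_apply_one_zero (x : ℤ) (M : Matrix (Fin 2) (Fin 2) ℤ) :
    (hjMatrix x * M) 1 0 = M 0 0 := by
  simp [hjMatrix, Matrix.mul_apply, Fin.sum_univ_two]

@[simp]
lemma hj_castList_nil : hj (castList []) = 0 := rfl

@[simp]
lemma hj_castList_cons (x : ℤ) (t : List ℤ) :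
    hj (castList (x :: t)) = x - (hj (castList t))⁻¹ := rfl

lemma continuantMatrix_bounds {l : List ℤ} (h2 : ∀ x ∈ l, 2 ≤ x) :
    0 ≤ continuantMatrix l 1 0 ∧ continuantMatrix l 1 0 < continuantMatrix l 0 0 := by
  induction l with
  | nil => simp
  | cons x t ih =>
    obtain ⟨hx, ht⟩ := List.forall_mem_cons.1 h2
    obtain ⟨h0, hlt⟩ := ih ht
    rw [continuantMatrix_cons, hjMatrix_mul_apply_zero_zero, hjMatrix_mul_apply_one_zero]
    constructor <;> nlinarith

lemma hj_castList_eq_div {l : List ℤ} (h2 : ∀ x ∈ l, 2 ≤ x) :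
    hj (castList l) = continuantMatrix l 0 0 / continuantMatrix l 1 0 := by
  induction l with
  | nil => simp
  | cons x t ih =>
    obtain ⟨hx, ht⟩ := List.forall_mem_cons.1 h2
    have hpos : (0 : ℚ) < continuantMatrix t 0 0 := by
      exact_mod_cast (continuantMatrix_bounds ht).1.trans_lt (continuantMatrix_bounds ht).2
    rw [hj_castList_cons, ih ht, continuantMatrix_cons,
      hjMatrix_mul_apply_zero_zero, hjMatrix_mul_apply_one_zero, inv_div]
    push_cast
    field_simp

lemma ceil_hj_castList_cons {x : ℤ} {t : List ℤ} (h2 : ∀ y ∈ x :: t, 2 ≤ y) :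
    ⌈hj (castList (x :: t))⌉ = x := by
  obtain ⟨h0, hlt⟩ := continuantMatrix_bounds (List.forall_mem_cons.1 h2).2
  have hpos : (0 : ℚ) < continuantMatrix t 0 0 := by exact_mod_cast h0.trans_lt hlt
  have hinv : (hj (castList t))⁻¹ ∈ Set.Ico (0 : ℚ) 1 := by
    rw [hj_castList_eq_div (List.forall_mem_cons.1 h2).2, inv_div, Set.mem_Ico,
      div_lt_one hpos]
    exact ⟨by positivity, by exact_mod_cast hlt⟩
  rw [Int.ceil_eq_iff, hj_castList_cons]
  constructor <;> linarith [hinv.1, hinv.2]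

lemma eq_of_hj_castList_eq {l₁ l₂ : List ℤ} (h₁ : ∀ x ∈ l₁, 2 ≤ x) (h₂ : ∀ x ∈ l₂, 2 ≤ x)
    (h : hj (castList l₁) = hj (castList l₂)) : l₁ = l₂ := by
  induction l₁ generalizing l₂ with
  | nil =>
    cases l₂ with
    | nil => rfl
    | cons y s =>
      have := ceil_hj_castList_cons h₂
      rw [← h, hj_castList_nil, Int.ceil_zero] at this
      linarith [h₂ y List.mem_cons_self]
  | cons x t ih =>
    cases l₂ with
    | nil =>
      have := ceil_hj_castList_cons h₁
      rw [h, hj_castList_nil, Int.ceil_zero] at this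
      linarith [h₁ x List.mem_cons_self]
    | cons y s =>
      have hxy : x = y := by
        rw [← ceil_hj_castList_cons h₁, ← ceil_hj_castList_cons h₂, h]
      subst hxy
      rw [hj_castList_cons, hj_castList_cons, sub_right_inj, inv_inj] at h
      rw [ih (List.forall_mem_cons.1 h₁).2 (List.forall_mem_cons.1 h₂).2 h]

def wahlMatrix (m a : ℤ) : Matrix (Fin 2) (Fin 2) ℤ :=
  !![m ^ 2, m * a - m ^ 2 + 1; m * a - 1, a ^ 2 - m * a + 1]

lemma hjMatrix_two_mul_wahlMatrix_mul (m a : ℤ) :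
    hjMatrix 2 * wahlMatrix m a * !![1, 0; -1, 1] = wahlMatrix (2 * m - a) m := by
  ext i j; fin_cases i <;> fin_cases j <;>
    simp [hjMatrix, wahlMatrix, Matrix.mul_apply, Fin.sum_univ_two] <;> ring

lemma mul_wahlMatrix_mul_hjMatrix_two (m a : ℤ) :
    !![1, 1; 0, 1] * wahlMatrix m a * hjMatrix 2 = wahlMatrix (m + a) a := by
  ext i j; fin_cases i <;> fin_cases j <;>
    simp [hjMatrix, wahlMatrix, Matrix.mul_apply, Fin.sum_univ_two] <;> ring

inductive IsWahlString : ℤ → ℤ → List ℤ → Prop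
  | base : IsWahlString 2 1 [4]
  | left {m a : ℤ} {u : List ℤ} {c : ℤ} :
      IsWahlString m a (u ++ [c]) → IsWahlString (2 * m - a) m (2 :: (u ++ [c + 1]))
  | right {m a : ℤ} {x : ℤ} {t : List ℤ} :
      IsWahlString m a (x :: t) → IsWahlString (m + a) a ((x + 1) :: t ++ [2])

namespace IsWahlString

variable {m a : ℤ} {w : List ℤ}

lemma ne_nil (h : IsWahlString m a w) : w ≠ [] := by
  cases h <;> simp

lemma bounds (h : IsWahlString m a w) : 1 ≤ a ∧ a < m := by
  induction h <;> omega

lemma isCoprime (h : IsWahlString m a w) : IsCoprime m a := by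
  induction h with
  | base => exact isCoprime_one_right
  | left _ ih => exact IsCoprime.mul_sub_right_left_iff.2 ih.symm
  | right _ ih => simpa using (IsCoprime.add_mul_right_left_iff (z := 1)).2 ih

lemma two_le (h : IsWahlString m a w) : ∀ x ∈ w, 2 ≤ x := by
  induction h with
  | base => simp
  | @left _ _ u c _ ih =>
    intro x hx
    simp only [List.mem_cons, List.mem_append, List.not_mem_nil, or_false] at hx
    rcases hx with rfl | hx | rfl
    · exact le_rfl
    · exact ih x (by simp [hx])
    · linarith [ih c (by simp)]
  | @right _ _ y t _ ih =>
    intro x hx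
    simp only [List.cons_append, List.mem_cons, List.mem_append, List.not_mem_nil,
      or_false] at hx
    rcases hx with rfl | hx | rfl
    · linarith [ih y (by simp)]
    · exact ih x (by simp [hx])
    · exact le_rfl

lemma continuantMatrix_eq (h : IsWahlString m a w) : continuantMatrix w = wahlMatrix m a := by
  induction h with
  | base => simp [continuantMatrix, hjMatrix, wahlMatrix]
  | @left m a u c _ ih =>
    rw [← hjMatrix_two_mul_wahlMatrix_mul, ← ih]
    simp [hjMatrix_add_one_eq_hjMatrix_mul, Matrix.mul_assoc]
  | @right m a x t _ ih =>
    rw [← mul_wahlMatrix_mul_hjMatrix_two, ← ih]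
    simp [hjMatrix_add_one_eq_mul_hjMatrix, Matrix.mul_assoc]

lemma hj_eq (h : IsWahlString m a w) :
    hj (castList w) = (m ^ 2 : ℚ) / (m * a - 1) := by
  rw [hj_castList_eq_div h.two_le, h.continuantMatrix_eq]
  simp [wahlMatrix]

lemma exists_three_le (h : IsWahlString m a w) : ∃ x ∈ w, 3 ≤ x := by
  cases h with
  | base => exact ⟨4, by simp, by norm_num⟩
  | @left _ _ u c hw => exact ⟨c + 1, by simp, by linarith [hw.two_le c (by simp)]⟩
  | @right _ _ x t hw => exact ⟨x + 1, by simp, by linarith [hw.two_le x (by simp)]⟩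

lemma flip (h : IsWahlString m a w) {x c : ℤ} {u : List ℤ} {k : ℕ}
    (hw : w = x :: (u ++ c :: List.replicate k 2)) (hc : 3 ≤ c) :
    ∃ m' a', m' < m ∧ IsWahlString m' a' (u ++ [c - 1]) := by
  induction h generalizing x u k with
  | base => simp at hw
  | @left m a u' c' h _ =>
    have hc' := h.two_le c' (by simp)
    obtain ⟨-, hw⟩ := List.cons.inj hw
    cases k with
    | zero =>
      obtain ⟨rfl, hcc⟩ := List.append_inj' hw rfl
      obtain rfl : c = c' + 1 := (List.singleton_inj.1 hcc).symm
      exact ⟨m, a, by linarith [h.bounds], by simpa using h⟩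
    | succ k =>
      rw [List.append_cons_replicate_succ] at hw
      have := List.singleton_inj.1 (List.append_inj' hw rfl).2
      omega
  | @right m a y t h ih =>
    obtain ⟨-, hw⟩ := List.cons.inj hw
    cases k with
    | zero =>
      have := List.singleton_inj.1 (List.append_inj' hw rfl).2
      omega
    | succ k =>
      rw [List.append_cons_replicate_succ] at hw
      obtain ⟨rfl, -⟩ := List.append_inj' hw rfl
      obtain ⟨m', a', hlt, hw'⟩ := ih rfl
      exact ⟨m', a', by linarith [h.bounds], hw'⟩

end IsWahlString

lemma exists_isWahlString (m a : ℤ) (ha : 1 ≤ a) (ham : a < m) (hcop : IsCoprime m a) :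
    ∃ w, IsWahlString m a w := by
  rcases lt_trichotomy (2 * a) m with hlt | heq | hgt
  · obtain ⟨w, hw⟩ := exists_isWahlString (m - a) a ha (by omega)
      (by simpa using (IsCoprime.sub_mul_right_left_iff (z := 1)).2 hcop)
    obtain ⟨x, t, rfl⟩ := List.exists_cons_of_ne_nil hw.ne_nil
    exact ⟨_, by simpa using hw.right⟩
  · have ha1 : IsUnit a := by
      rw [← heq] at hcop
      exact isCoprime_self.1 (IsCoprime.mul_left_iff.1 hcop).2
    obtain rfl : a = 1 := by rcases Int.isUnit_iff.1 ha1 with h | h <;> omega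
    obtain rfl : m = 2 := by omega
    exact ⟨_, .base⟩
  · obtain ⟨w, hw⟩ := exists_isWahlString a (2 * a - m) (by omega) (by omega)
      (IsCoprime.mul_sub_right_right_iff.2 hcop.symm)
    obtain ⟨u, c, rfl⟩ : ∃ u c, w = u ++ [c] :=
      ⟨_, _, (List.dropLast_append_getLast hw.ne_nil).symm⟩
    exact ⟨_, by simpa using hw.left⟩
termination_by m.toNat
decreasing_by all_goals omega

theorem stmt_14_general (m a : ℤ) (ha : 1 ≤ a) (ham : a < m)
    (hcop : Int.gcd m a = 1) (e : List ℤ) (h2 : ∀ x ∈ e, 2 ≤ x)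
    (hval : hj (castList e) = (m ^ 2 : ℚ) / (m * a - 1)) :
    (∃ j : Fin e.length, 3 ≤ e.get j) ∧
    ∀ i : ℕ, ∀ hi : i < e.length, 3 ≤ e.get ⟨i, hi⟩ →
      (∀ j : ℕ, ∀ hje : j < e.length, i < j → e.get ⟨j, hje⟩ = 2) →
      1 ≤ i →
      ∃ m' a' : ℤ, 2 ≤ m' ∧ m' < m ∧ 1 ≤ a' ∧ a' < m' ∧ Int.gcd m' a' = 1 ∧
        (∀ x ∈ (e.drop 1).take (i - 1) ++ [e.get ⟨i, hi⟩ - 1], 2 ≤ x) ∧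
        hj (castList ((e.drop 1).take (i - 1) ++ [e.get ⟨i, hi⟩ - 1]))
          = (m' ^ 2 : ℚ) / (m' * a' - 1) := by
  obtain ⟨w, hw⟩ := exists_isWahlString m a ha ham (Int.isCoprime_iff_gcd_eq_one.2 hcop)
  obtain rfl : e = w := eq_of_hj_castList_eq h2 hw.two_le (hval.trans hw.hj_eq.symm)
  refine ⟨?_, fun i hi h3 hafter h1 => ?_⟩
  · obtain ⟨x, hx, h3⟩ := hw.exists_three_le
    obtain ⟨j, rfl⟩ := List.mem_iff_get.1 hx
    exact ⟨j, h3⟩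
  · rw [List.eq_cons_take_append_cons_replicate hi h1 (by simpa using hafter)] at hw
    obtain ⟨m', a', hlt, hw'⟩ := hw.flip rfl (by simpa using h3)
    obtain ⟨ha', ham'⟩ := hw'.bounds
    refine ⟨m', a', by omega, hlt, ha', ham', Int.isCoprime_iff_gcd_eq_one.1 hw'.isCoprime,
      ?_, ?_⟩
    · simpa using hw'.two_le
    · simpa using hw'.hj_eq

theorem stmt_14 (m a : ℤ) (hm : 2 ≤ m) (ha : 1 ≤ a) (ham : a < m)
    (hcop : Int.gcd m a = 1) (e : List ℤ) (h2 : ∀ x ∈ e, 2 ≤ x) (hlen : 2 ≤ e.length)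
    (hval : hj (castList e) = (m ^ 2 : ℚ) / (m * a - 1)) :
    (∃ j : Fin e.length, 3 ≤ e.get j) ∧
    ∀ i : ℕ, ∀ hi : i < e.length, 3 ≤ e.get ⟨i, hi⟩ →
      (∀ j : ℕ, ∀ hje : j < e.length, i < j → e.get ⟨j, hje⟩ = 2) →
      1 ≤ i →
      ∃ m' a' : ℤ, 2 ≤ m' ∧ m' < m ∧ 1 ≤ a' ∧ a' < m' ∧ Int.gcd m' a' = 1 ∧
        (∀ x ∈ (e.drop 1).take (i - 1) ++ [e.get ⟨i, hi⟩ - 1], 2 ≤ x) ∧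
        hj (castList ((e.drop 1).take (i - 1) ++ [e.get ⟨i, hi⟩ - 1]))
          = (m' ^ 2 : ℚ) / (m' * a' - 1) :=
  stmt_14_general m a ha ham hcop e h2 hval
end
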